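/- arXiv:1609.07048 — 7 statements merged into one kernel-verified Lean document; each statement's English description precedes it below -/
import Mathlib

section
/- For every subset B of ℝ^d, the Minkowski sum of B with d copies of the convex hull of B equals (d+1) times the convex hull of B; that is, B + d·CH(B) = (d+1)·CH(B), where d·S denotes the scalar dilation {d·s : s ∈ S}. -/
/-!
By Carathéodory, a point `x` of the convex hull of `s` in dimension at most `n` is a convex
combination of at most `n + 1` points of `s`, so one of them, `z i`, carries weight at least
`1 / (n + 1)`. Then `(n + 1) • x - z i` is a combination of points of `s` with nonnegative
weights summing to `n`, i.e. a point of `n • convexHull s`.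
-/

open Pointwise

section

variable {𝕜 E : Type*} [Field 𝕜] [LinearOrder 𝕜] [IsStrictOrderedRing 𝕜] [AddCommGroup E]
  [Module 𝕜 E] {s : Set E}

theorem add_smul_convexHull_subset {n : 𝕜} (hn : 0 ≤ n) :
    s + n • convexHull 𝕜 s ⊆ (n + 1) • convexHull 𝕜 s := by
  rw [(convex_convexHull 𝕜 s).add_smul hn zero_le_one, one_smul, add_comm (n • _)]
  exact Set.add_subset_add_right (subset_convexHull 𝕜 s)

theorem sum_smul_mem_sum_smul_convexHull {ι : Type*} [Fintype ι] [Nonempty ι] {z : ι → E}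
    (hz : ∀ i, z i ∈ s) {u : ι → 𝕜} (hu : ∀ i, 0 ≤ u i) :
    ∑ i, u i • z i ∈ (∑ i, u i) • convexHull 𝕜 s := by
  rcases (Finset.sum_nonneg fun i _ ↦ hu i).eq_or_lt with hzero | hpos
  · have hu0 : ∀ i, u i = 0 := fun i ↦
      (Finset.sum_eq_zero_iff_of_nonneg fun i _ ↦ hu i).1 hzero.symm i (Finset.mem_univ i)
    rw [← hzero, Set.zero_smul_set ⟨_, subset_convexHull 𝕜 s (hz (Classical.arbitrary ι))⟩]
    simp [hu0]
  · exact ⟨Finset.univ.centerMass u z,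
      Finset.univ.centerMass_mem_convexHull (fun i _ ↦ hu i) hpos fun i _ ↦ hz i,
      smul_inv_smul₀ hpos.ne' _⟩

theorem add_one_smul_sum_mem_add_smul_convexHull {ι : Type*} [Fintype ι] [DecidableEq ι]
    {z : ι → E} (hz : ∀ j, z j ∈ s) {w : ι → 𝕜} (hw₀ : ∀ j, 0 ≤ w j) (hw₁ : ∑ j, w j = 1)
    {n : 𝕜} {i : ι} (hi : 1 ≤ (n + 1) * w i) :
    (n + 1) • ∑ j, w j • z j ∈ s + n • convexHull 𝕜 s := by
  have : Nonempty ι := ⟨i⟩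
  have hn : 0 < n + 1 := pos_of_mul_pos_left (one_pos.trans_le hi) (hw₀ i)
  set u : ι → 𝕜 := fun j ↦ (n + 1) * w j - if j = i then 1 else 0
  have hu : ∀ j, 0 ≤ u j := by
    intro j
    by_cases hj : j = i
    · simpa [u, hj] using hi
    · simpa [u, hj] using mul_nonneg hn.le (hw₀ j)
  have hu_sum : ∑ j, u j = n := by simp [u, Finset.sum_sub_distrib, ← Finset.mul_sum, hw₁]
  have hsplit : (n + 1) • ∑ j, w j • z j = z i + ∑ j, u j • z j := by
    simp [u, sub_smul, ite_smul, Finset.sum_sub_distrib, mul_smul, Finset.smul_sum]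
  rw [hsplit, ← hu_sum]
  exact Set.add_mem_add (hz i) (sum_smul_mem_sum_smul_convexHull hz hu)

theorem add_smul_convexHull_eq [FiniteDimensional 𝕜 E] {n : ℕ} (hn : Module.finrank 𝕜 E ≤ n)
    (s : Set E) : s + (n : 𝕜) • convexHull 𝕜 s = ((n : 𝕜) + 1) • convexHull 𝕜 s := by
  classical
  refine (add_smul_convexHull_subset n.cast_nonneg).antisymm ?_
  rintro _ ⟨x, hx, rfl⟩
  obtain ⟨ι, _, z, w, hzs, hz_ind, hw_pos, hw₁, rfl⟩ := eq_pos_convex_span_of_mem_convexHull hx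
  have hcard : (Fintype.card ι : 𝕜) ≤ n + 1 := by
    exact_mod_cast hz_ind.card_le_finrank_succ.trans
      (Nat.add_le_add_right ((Submodule.finrank_le _).trans hn) 1)
  have : Nonempty ι := by
    by_contra h
    simp [not_nonempty_iff.1 h] at hw₁
  obtain ⟨i, -, hi⟩ : ∃ i ∈ Finset.univ, (n + 1 : 𝕜)⁻¹ ≤ w i := by
    refine Finset.exists_le_of_sum_le Finset.univ_nonempty ?_
    rw [hw₁, Finset.sum_const, Finset.card_univ, nsmul_eq_mul, ← div_eq_mul_inv]
    exact div_le_one_of_le₀ hcard (by positivity)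
  refine add_one_smul_sum_mem_add_smul_convexHull (fun j ↦ hzs ⟨j, rfl⟩)
    (fun j ↦ (hw_pos j).le) hw₁ (i := i) ?_
  rwa [← inv_le_iff_one_le_mul₀' (by positivity)]

end

theorem minkowski_sum_convexHull_dilation (d : ℕ) (B : Set (Fin d → ℝ)) :
    B + (d : ℝ) • convexHull ℝ B = ((d : ℝ) + 1) • convexHull ℝ B :=
  add_smul_convexHull_eq (Module.finrank_fin_fun ℝ).le B
end

section
/- Every point of (d+1)·CH(B) for B ⊆ ℝ^d can be written as b + c where b ∈ B and c ∈ d·CH(B). More precisely, if x ∈ ℝ^d satisfies (d+1)⁻¹·x ∈ CH(B), then there exist b ∈ B and c ∈ CH(B)·d with x = b + c. -/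
open Pointwise

/-!
By Carathéodory, `(d+1)⁻¹ • x` is a convex combination `∑ wⱼ zⱼ` of at most `d + 1` points of `B`,
so some weight satisfies `(d+1) wᵢ ≥ 1`. Peeling off `zᵢ` leaves
`x - zᵢ = ∑ ((d+1) wⱼ - δᵢⱼ) zⱼ`, a nonnegative combination of total weight `d`, i.e. a point of
`d • CH(B)`.
-/

open Finset Module

section

variable {𝕜 E ι : Type*} [Field 𝕜] [LinearOrder 𝕜] [IsStrictOrderedRing 𝕜]
  [AddCommGroup E] [Module 𝕜 E] {s : Set E}

lemma Finset.sum_smul_mem_smul_convexHull {t : Finset ι} (ht : t.Nonempty) {μ : ι → 𝕜}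
    {z : ι → E} (hμ : ∀ j ∈ t, 0 ≤ μ j) (hz : ∀ j ∈ t, z j ∈ s) :
    ∑ j ∈ t, μ j • z j ∈ (∑ j ∈ t, μ j) • convexHull 𝕜 s := by
  rcases (sum_nonneg hμ).eq_or_lt with hsum | hsum
  · have hμ0 : ∀ j ∈ t, μ j = 0 := (sum_eq_zero_iff_of_nonneg hμ).1 hsum.symm
    have hs : (convexHull 𝕜 s).Nonempty :=
      ⟨z ht.choose, subset_convexHull 𝕜 s (hz _ ht.choose_spec)⟩
    rw [← hsum, Set.zero_smul_set hs, sum_eq_zero fun j hj => by rw [hμ0 j hj, zero_smul]]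
    rfl
  · refine ⟨t.centerMass μ z, t.centerMass_mem_convexHull hμ hsum hz, ?_⟩
    simp only [centerMass, smul_smul, mul_inv_cancel₀ hsum.ne', one_smul]

lemma Finset.exists_one_le_mul_of_sum_eq_one {t : Finset ι} (ht : t.Nonempty) {w : ι → 𝕜}
    (hw : ∑ j ∈ t, w j = 1) {n : 𝕜} (hn : (#t : 𝕜) ≤ n) : ∃ i ∈ t, 1 ≤ n * w i := by
  by_contra! h
  have : n < n := calc
    n = ∑ j ∈ t, n * w j := by rw [← mul_sum, hw, mul_one]
    _ < ∑ _j ∈ t, 1 := sum_lt_sum_of_nonempty ht h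
    _ ≤ n := by simpa using hn
  exact this.false

lemma Finset.smul_sum_sub_mem_smul_convexHull [DecidableEq ι] {t : Finset ι} {w : ι → 𝕜}
    {z : ι → E} (hw : ∀ j ∈ t, 0 ≤ w j) (hw₁ : ∑ j ∈ t, w j = 1) (hz : ∀ j ∈ t, z j ∈ s)
    {i : ι} (hi : i ∈ t) {r : 𝕜} (hr : 1 ≤ r * w i) :
    r • ∑ j ∈ t, w j • z j - z i ∈ (r - 1) • convexHull 𝕜 s := by
  set μ : ι → 𝕜 := fun j => r * w j - if j = i then 1 else 0
  have hr₀ : 0 ≤ r := by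
    by_contra! hr₀
    nlinarith [hw i hi]
  have hμ : ∀ j ∈ t, 0 ≤ μ j := by
    intro j hj
    by_cases hji : j = i
    · simp [μ, hji, hr]
    · simpa [μ, hji] using mul_nonneg hr₀ (hw j hj)
  have hμsum : ∑ j ∈ t, μ j = r - 1 := by
    simp [μ, sum_sub_distrib, ← mul_sum, hw₁, hi]
  have hμz : ∑ j ∈ t, μ j • z j = r • ∑ j ∈ t, w j • z j - z i := by
    simp [μ, sub_smul, sum_sub_distrib, smul_sum, smul_smul, ite_smul, hi]
  rw [← hμsum, ← hμz]
  exact sum_smul_mem_smul_convexHull ⟨i, hi⟩ hμ hz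

theorem exists_mem_add_finrank_smul_convexHull [FiniteDimensional 𝕜 E] {x : E}
    (hx : ((finrank 𝕜 E : 𝕜) + 1)⁻¹ • x ∈ convexHull 𝕜 s) :
    ∃ b ∈ s, ∃ c ∈ (finrank 𝕜 E : 𝕜) • convexHull 𝕜 s, x = b + c := by
  classical
  obtain ⟨ι, _, z, w, hzs, hz, hw, hw₁, hwz⟩ := eq_pos_convex_span_of_mem_convexHull hx
  have hcard : (#(univ : Finset ι) : 𝕜) ≤ finrank 𝕜 E + 1 := by
    rw [card_univ]
    exact_mod_cast hz.card_le_finrank_succ.trans (by gcongr; exact Submodule.finrank_le _)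
  have hne : (univ : Finset ι).Nonempty := nonempty_of_sum_ne_zero (by rw [hw₁]; exact one_ne_zero)
  obtain ⟨i, -, hi⟩ := exists_one_le_mul_of_sum_eq_one hne hw₁ hcard
  have hmem := univ.smul_sum_sub_mem_smul_convexHull (fun j _ => (hw j).le) hw₁
    (fun j _ => hzs ⟨j, rfl⟩) (mem_univ i) hi
  rw [hwz, smul_inv_smul₀ (by positivity), add_sub_cancel_right] at hmem
  exact ⟨z i, hzs ⟨i, rfl⟩, x - z i, hmem, (add_sub_cancel _ _).symm⟩

end

theorem mem_smul_convexHull_decompose (d : ℕ) (B : Set (Fin d → ℝ)) (x : Fin d → ℝ)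
    (hx : ((d : ℝ) + 1)⁻¹ • x ∈ convexHull ℝ B) :
    ∃ b ∈ B, ∃ c ∈ (d : ℝ) • convexHull ℝ B, x = b + c := by
  have h := exists_mem_add_finrank_smul_convexHull (s := B) (x := x) (by rwa [finrank_fin_fun])
  rwa [finrank_fin_fun] at h
end

section
/- Let S ⊆ E ⊆ ℝ^d with 0 ∉ CH(S). Then there exists a subset S' ⊆ E such that 0 ∉ CH(S ∪ S') and the linear span of S ∪ S' equals the linear span of E. -/
/-!
Among the subsets `B` with `S ⊆ B ⊆ E` and `0 ∉ CH(B)` take a maximal one (Zorn: a convex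
combination involves finitely many points, so such a family is closed under unions of chains).
It spans `span E`: otherwise some `e ∈ E` lies outside `span B`, and `0 ∉ CH(B ∪ {e})`, since
`0 = a e + b y` with `y ∈ CH(B)` and `a > 0` would put `e` in `span B`.
-/

open Set

section

variable {𝕜 V : Type*} [Field 𝕜] [LinearOrder 𝕜] [IsStrictOrderedRing 𝕜]
  [AddCommGroup V] [Module 𝕜 V]

theorem DirectedOn.convexHull_sUnion {c : Set (Set V)} (hn : c.Nonempty)
    (hc : DirectedOn (· ⊆ ·) c) :
    convexHull 𝕜 (⋃₀ c) = ⋃ s ∈ c, convexHull 𝕜 s := by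
  refine Subset.antisymm ?_
    (iUnion₂_subset fun s hs ↦ convexHull_mono (subset_sUnion_of_mem hs))
  rw [convexHull_eq_union_convexHull_finite_subsets]
  simp only [iUnion_subset_iff]
  intro t htc x hx
  obtain ⟨s, hs, hts⟩ := hc.exists_mem_subset_of_finite_of_subset_sUnion hn t.finite_toSet htc
  exact mem_biUnion hs (convexHull_mono hts hx)

theorem mem_span_of_zero_mem_convexHull_insert {A : Set V} {e : V}
    (hA : (0 : V) ∉ convexHull 𝕜 A) (h : (0 : V) ∈ convexHull 𝕜 (insert e A)) :
    e ∈ Submodule.span 𝕜 A := by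
  rcases A.eq_empty_or_nonempty with rfl | hne
  · rw [insert_empty_eq, convexHull_singleton, mem_singleton_iff] at h
    simp [← h]
  rw [convexHull_insert hne, convexJoin_singleton_left, mem_iUnion₂] at h
  obtain ⟨y, hy, a, b, ha, hb, hab, hsum⟩ := h
  obtain rfl | ha := ha.eq_or_lt
  · obtain rfl : b = 1 := by simpa using hab
    exact absurd (by simpa using hsum) (ne_of_mem_of_not_mem hy hA)
  have he : e = (-(b / a)) • y := by
    rw [neg_smul, eq_neg_iff_add_eq_zero, div_eq_inv_mul, ← smul_smul,
      ← inv_smul_smul₀ ha.ne' e, ← smul_add, hsum, smul_zero]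
  have hy_span : y ∈ Submodule.span 𝕜 A :=
    convexHull_min Submodule.subset_span (Submodule.span 𝕜 A).convex hy
  exact he ▸ Submodule.smul_mem _ _ hy_span

theorem exists_superset_zero_notMem_convexHull_span_eq {S E : Set V} (hSE : S ⊆ E)
    (hS : (0 : V) ∉ convexHull 𝕜 S) :
    ∃ B, S ⊆ B ∧ B ⊆ E ∧ (0 : V) ∉ convexHull 𝕜 B ∧
      Submodule.span 𝕜 B = Submodule.span 𝕜 E := by
  have hchain : ∀ c ⊆ {B | B ⊆ E ∧ (0 : V) ∉ convexHull 𝕜 B}, IsChain (· ⊆ ·) c →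
      c.Nonempty → ∃ ub ∈ {B | B ⊆ E ∧ (0 : V) ∉ convexHull 𝕜 B}, ∀ B ∈ c, B ⊆ ub := by
    intro c hc hc_chain hne
    refine ⟨⋃₀ c, ⟨sUnion_subset fun B hB ↦ (hc hB).1, ?_⟩, fun _ ↦ subset_sUnion_of_mem⟩
    rw [hc_chain.directedOn.convexHull_sUnion hne]
    simpa using fun B hB ↦ (hc hB).2
  obtain ⟨B, hSB, ⟨hBE, hB0⟩, hmax⟩ := zorn_subset_nonempty _ hchain S ⟨hSE, hS⟩
  refine ⟨B, hSB, hBE, hB0, le_antisymm (Submodule.span_mono hBE) (Submodule.span_le.2 ?_)⟩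
  intro e heE
  by_contra he
  have hins : insert e B ⊆ B :=
    hmax ⟨insert_subset heE hBE, fun h ↦ he (mem_span_of_zero_mem_convexHull_insert hB0 h)⟩
      (subset_insert e B)
  exact he (Submodule.subset_span (hins (mem_insert e B)))

end

theorem exists_extension_keeping_zero_outside_convexHull (d : ℕ)
    (S E : Set (Fin d → ℝ)) (hSE : S ⊆ E) (h0 : (0 : Fin d → ℝ) ∉ convexHull ℝ S) :
    ∃ S' ⊆ E, (0 : Fin d → ℝ) ∉ convexHull ℝ (S ∪ S') ∧
      Submodule.span ℝ (S ∪ S') = Submodule.span ℝ E := by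
  obtain ⟨B, hSB, hBE, hB0, hBspan⟩ :=
    exists_superset_zero_notMem_convexHull_span_eq hSE h0
  rw [← union_eq_right.2 hSB] at hB0 hBspan
  exact ⟨B, hBE, hB0, hBspan⟩
end

section
/- Let B ⊆ ℝ^d be compact and convex, let A₁,…,Aₙ ⊆ ℝ^d, and suppose there exist aᵢ ∈ CH(closure(Aᵢ)) for i ≤ n such that 0 ∉ CH{a₁,…,aₙ} + B. Then there exist a'ᵢ ∈ Aᵢ such that 0 ∉ CH{a'₁,…,a'ₙ} + B. -/
/-!
Separate `-B` from the compact set `convexHull ℝ {a₁, …, aₙ}` by a continuous linear functional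
`f`: for some `c`, `c < f aᵢ` for all `i` and `-c < f b` on `B`. Since `{x | f x ≤ c}` is closed
and convex, `aᵢ ∈ convexHull ℝ (closure Aᵢ)` forces some `a'ᵢ ∈ Aᵢ` with `c < f a'ᵢ`, and the
same functional then keeps `0` out of `convexHull ℝ {a'₁, …, a'ₙ} + B`.
-/

open Pointwise

section Separation

variable {E : Type*} [AddCommGroup E] [Module ℝ E] [TopologicalSpace E]

theorem exists_mem_lt_apply_of_mem_convexHull_closure (f : E →L[ℝ] ℝ) {s : Set E} {x : E}
    {c : ℝ} (hx : x ∈ convexHull ℝ (closure s)) (hc : c < f x) : ∃ y ∈ s, c < f y := by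
  by_contra! h
  have hclosed : IsClosed {y | f y ≤ c} := isClosed_le f.continuous continuous_const
  have hconvex : Convex ℝ {y | f y ≤ c} := (convex_Iic c).linear_preimage (f : E →ₗ[ℝ] ℝ)
  have hle : f x ≤ c := convexHull_min (closure_minimal h hclosed) hconvex hx
  exact hle.not_gt hc

omit [TopologicalSpace E] in
theorem zero_notMem_convexHull_add_of_lt_apply (f : E →ₗ[ℝ] ℝ) {s t : Set E} {c : ℝ}
    (hs : ∀ x ∈ s, c < f x) (ht : ∀ b ∈ t, -c < f b) : (0 : E) ∉ convexHull ℝ s + t := by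
  rintro ⟨x, hx, b, hb, hxb⟩
  have hfx : c < f x := convexHull_min hs ((convex_Ioi c).linear_preimage f) hx
  have hsum : f x + f b = 0 := by rw [← map_add, show x + b = 0 from hxb, map_zero]
  linarith [ht b hb]

variable [IsTopologicalAddGroup E] [ContinuousSMul ℝ E] [LocallyConvexSpace ℝ E] [T2Space E]

theorem exists_lt_apply_of_zero_notMem_convexHull_add {s B : Set E} (hs : s.Finite)
    (hBc : IsCompact B) (hBconv : Convex ℝ B) (h0 : (0 : E) ∉ convexHull ℝ s + B) :
    ∃ (f : E →L[ℝ] ℝ) (c : ℝ), (∀ x ∈ s, c < f x) ∧ ∀ b ∈ B, -c < f b := by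
  have hdisj : Disjoint (-B) (convexHull ℝ s) :=
    Set.disjoint_left.2 fun x hxB hxK => h0 ⟨x, hxK, -x, hxB, add_neg_cancel x⟩
  obtain ⟨f, u, v, hB, huv, hK⟩ := geometric_hahn_banach_compact_closed hBconv.neg hBc.neg
    (convex_convexHull ℝ s) (hs.isCompact_convexHull ℝ).isClosed hdisj
  refine ⟨f, u, fun x hx => huv.trans (hK x (subset_convexHull ℝ s hx)), fun b hb => ?_⟩
  have hfb : f (-b) < u := hB (-b) (by simpa using hb)
  rw [map_neg] at hfb
  linarith

end Separation

theorem exists_points_in_moves_zero_notin_convexHull_add (d n : ℕ)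
    (B : Set (Fin d → ℝ)) (hBc : IsCompact B) (hBconv : Convex ℝ B)
    (A : Fin n → Set (Fin d → ℝ)) (a : Fin n → (Fin d → ℝ))
    (ha : ∀ i, a i ∈ convexHull ℝ (closure (A i)))
    (h0 : (0 : Fin d → ℝ) ∉ convexHull ℝ (Set.range a) + B) :
    ∃ a' : Fin n → (Fin d → ℝ), (∀ i, a' i ∈ A i) ∧
      (0 : Fin d → ℝ) ∉ convexHull ℝ (Set.range a') + B := by
  obtain ⟨f, c, hfa, hfB⟩ :=
    exists_lt_apply_of_zero_notMem_convexHull_add (Set.finite_range a) hBc hBconv h0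
  have hmove : ∀ i, ∃ y ∈ A i, c < f y := fun i =>
    exists_mem_lt_apply_of_mem_convexHull_closure f (ha i) (hfa _ ⟨i, rfl⟩)
  choose a' ha'A ha'f using hmove
  refine ⟨a', ha'A, zero_notMem_convexHull_add_of_lt_apply (f : (Fin d → ℝ) →ₗ[ℝ] ℝ) ?_ hfB⟩
  rintro _ ⟨i, rfl⟩
  exact ha'f i
end

section
/- Let W ⊆ T ⊆ ℝ^d with T bounded and convex and W nonempty, and suppose that for every t ∈ ℝ^d, if t + W ⊆ T then t + W ⊆ W. Then for every t ∈ ℝ^d \ {0}, the translate t + W intersects the complement of T: (t + W) ∩ (ℝ^d \ T) ≠ ∅. -/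
/-! If `t + W ⊆ T`, the hypothesis makes `W` invariant under translation by `t`, so `W ⊆ T` contains
the orbit `w + ℕ • t` of any `w ∈ W`; a bounded set contains such an orbit only when `t = 0`. -/

theorem Set.MapsTo.nsmul_add_mem {M : Type*} [AddMonoid M] {W : Set M} {t w : M}
    (hW : Set.MapsTo (t + ·) W W) (hw : w ∈ W) (n : ℕ) : n • t + w ∈ W := by
  simpa using hW.iterate n hw

theorem eq_zero_of_forall_nsmul_add_mem {E : Type*} [NormedAddCommGroup E] [NormedSpace ℝ E]
    {S : Set E} (hS : Bornology.IsBounded S) {t w : E} (h : ∀ n : ℕ, n • t + w ∈ S) :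
    t = 0 := by
  obtain ⟨C, hC⟩ := hS.exists_norm_le
  have hbound (n : ℕ) : n * ‖t‖ ≤ C + ‖w‖ := calc
    n * ‖t‖ = ‖n • t‖ := by rw [← Nat.cast_smul_eq_nsmul ℝ, norm_smul, Real.norm_natCast]
    _ ≤ ‖n • t + w‖ + ‖w‖ := norm_le_add_norm_add _ _
    _ ≤ C + ‖w‖ := by gcongr; exact hC _ (h n)
  by_contra ht
  obtain ⟨n, hn⟩ := exists_nat_gt ((C + ‖w‖) / ‖t‖)
  rw [div_lt_iff₀ (norm_pos_iff.2 ht)] at hn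
  linarith [hbound n]

theorem translate_winning_region_leaves_safe_general (d : ℕ) (W T : Set (Fin d → ℝ))
    (hWT : W ⊆ T) (hTb : Bornology.IsBounded T)
    (hWne : W.Nonempty)
    (h : ∀ t : Fin d → ℝ, (t + ·) '' W ⊆ T → (t + ·) '' W ⊆ W) :
    ∀ t : Fin d → ℝ, t ≠ 0 → ((t + ·) '' W ∩ Tᶜ).Nonempty := by
  intro t ht
  rw [Set.inter_compl_nonempty_iff]
  intro htW
  have hmaps : Set.MapsTo (t + ·) W W := Set.mapsTo_iff_image_subset.2 (h t htW)
  obtain ⟨w, hw⟩ := hWne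
  exact ht (eq_zero_of_forall_nsmul_add_mem hTb fun n => hWT (hmaps.nsmul_add_mem hw n))

theorem translate_winning_region_leaves_safe (d : ℕ) (W T : Set (Fin d → ℝ))
    (hWT : W ⊆ T) (hTb : Bornology.IsBounded T) (hTconv : Convex ℝ T)
    (hWne : W.Nonempty)
    (h : ∀ t : Fin d → ℝ, (t + ·) '' W ⊆ T → (t + ·) '' W ⊆ W) :
    ∀ t : Fin d → ℝ, t ≠ 0 → ((t + ·) '' W ∩ Tᶜ).Nonempty :=
  translate_winning_region_leaves_safe_general d W T hWT hTb hWne h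
end

section
/- In the d-dimensional +1/−1-game, Player A has a winning strategy for threshold −d: Player A can choose positions n₀, n₁, … ∈ {1,…,d} (responding after seeing the history of stochastic vectors played so far) such that against every sequence v₀, v₁, … of stochastic vectors (vᵢ ∈ [0,1]^d with coordinates summing to 1, with vᵢ chosen after nᵢ), for all j ∈ ℕ and all k ∈ {1,…,d}: |{i ≤ j : nᵢ = k}| − Σ_{i=0}^{j} (vᵢ)_k ≥ −d. -/
/-!
Player A plays greedily: in each round she picks a coordinate whose deficit
`∑ᵢ (vᵢ)ₖ - #{i | nᵢ = k}` is currently maximal. By induction on the round, the deficits of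
any set `S` of coordinates sum to at most `d - |S|`. If the greedy pick lies in `S`, the sum
over `S` gains at most `∑_{k ∈ S} vₖ - 1 ≤ 0`. Otherwise apply the bound to `S ∪ {pick}`: either
the maximal deficit is nonnegative and can be dropped, leaving room `1 ≥ ∑_{k ∈ S} vₖ`, or all
deficits are negative. Taking `S = {k}` bounds every deficit by `d - 1`.
-/

open Finset

namespace PlusMinusOneGame

variable {ι : Type*} [DecidableEq ι]

section Deficit

variable (p : ℕ → ι) (v : ℕ → ι → ℝ)

def deficit (n : ℕ) (k : ι) : ℝ :=
  ∑ i ∈ range n, (v i k - if p i = k then 1 else 0)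

lemma deficit_zero (k : ι) : deficit p v 0 k = 0 := by
  simp [deficit]

lemma sum_deficit_succ (n : ℕ) (S : Finset ι) :
    ∑ k ∈ S, deficit p v (n + 1) k =
      ∑ k ∈ S, deficit p v n k + ∑ k ∈ S, v n k - if p n ∈ S then 1 else 0 := by
  simp only [deficit, sum_range_succ, sum_add_distrib, sum_sub_distrib, sum_ite_eq]
  ring

variable {p v} [Fintype ι]

theorem sum_deficit_le_card_sub_card
    (hmax : ∀ n k, deficit p v n k ≤ deficit p v n (p n))
    (hv_nonneg : ∀ i k, 0 ≤ v i k) (hv_sum : ∀ i, ∑ k, v i k ≤ 1) (n : ℕ) (S : Finset ι) :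
    ∑ k ∈ S, deficit p v n k ≤ Fintype.card ι - #S := by
  induction n generalizing S with
  | zero =>
    have : (#S : ℝ) ≤ Fintype.card ι := by exact_mod_cast card_le_univ S
    simp only [deficit_zero, sum_const_zero]
    linarith
  | succ n ih =>
    have hvS : ∑ k ∈ S, v n k ≤ 1 :=
      (sum_le_sum_of_subset_of_nonneg (subset_univ S) fun k _ _ => hv_nonneg n k).trans (hv_sum n)
    rw [sum_deficit_succ]
    by_cases hpS : p n ∈ S
    · rw [if_pos hpS]
      linarith [ih S]
    · rw [if_neg hpS, sub_zero]
      suffices ∑ k ∈ S, deficit p v n k ≤ Fintype.card ι - #S - 1 by linarith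
      have hins := ih (insert (p n) S)
      rw [sum_insert hpS, card_insert_of_notMem hpS, Nat.cast_add, Nat.cast_one] at hins
      rcases le_or_gt 0 (deficit p v n (p n)) with hpos | hneg
      · linarith
      · have hS_nonpos : ∑ k ∈ S, deficit p v n k ≤ 0 :=
          sum_nonpos fun k _ => (hmax n k).trans hneg.le
        have hcard := card_le_univ (insert (p n) S)
        rw [card_insert_of_notMem hpS] at hcard
        have : (#S : ℝ) + 1 ≤ Fintype.card ι := by exact_mod_cast hcard
        linarith

theorem deficit_le_card_sub_one
    (hmax : ∀ n k, deficit p v n k ≤ deficit p v n (p n))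
    (hv_nonneg : ∀ i k, 0 ≤ v i k) (hv_sum : ∀ i, ∑ k, v i k ≤ 1) (n : ℕ) (k : ι) :
    deficit p v n k ≤ Fintype.card ι - 1 := by
  simpa using sum_deficit_le_card_sub_card hmax hv_nonneg hv_sum n {k}

end Deficit

variable [Fintype ι] [Nonempty ι]

/-- A strategy sees only the adversary's vectors, so the greedy strategy recomputes its own
past picks by running itself on the prefixes of the history. -/
noncomputable def greedy : (j : ℕ) → (Fin j → ι → ℝ) → ι
  | j, h => (Finite.exists_max fun k => ∑ i : Fin j,
      (h i k - if greedy i (fun t : Fin i => h (Fin.castLE i.2.le t)) = k then 1 else 0)).choose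

noncomputable def greedyPicks (v : ℕ → ι → ℝ) (i : ℕ) : ι :=
  greedy i fun t : Fin i => v t

lemma deficit_le_deficit_greedyPicks (v : ℕ → ι → ℝ) (n : ℕ) (k : ι) :
    deficit (greedyPicks v) v n k ≤ deficit (greedyPicks v) v n (greedyPicks v n) := by
  have hspec := (Finite.exists_max fun k => ∑ i : Fin n,
      (v i k - if greedyPicks v i = k then 1 else 0)).choose_spec k
  simp only [deficit, ← Fin.sum_univ_eq_sum_range (fun i => v i _ - _)]
  rw [greedyPicks, greedy]
  exact hspec

end PlusMinusOneGame

theorem playerA_wins_plus_minus_one_game (d : ℕ) (hd : 1 ≤ d) :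
    ∃ σ : (∀ j : ℕ, (Fin j → (Fin d → ℝ)) → Fin d),
      ∀ v : ℕ → (Fin d → ℝ),
        (∀ i, (∀ k, 0 ≤ v i k) ∧ ∑ k, v i k = 1) →
        ∀ j : ℕ, ∀ k : Fin d,
          ((Finset.range (j + 1)).filter
              (fun i => σ i (fun t : Fin i => v t) = k)).card -
            ∑ i ∈ Finset.range (j + 1), v i k ≥ -(d : ℝ) := by
  have : Nonempty (Fin d) := ⟨⟨0, hd⟩⟩
  refine ⟨PlusMinusOneGame.greedy, fun v hv j k => ?_⟩
  have hbound := PlusMinusOneGame.deficit_le_card_sub_one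
    (PlusMinusOneGame.deficit_le_deficit_greedyPicks v)
    (fun i => (hv i).1) (fun i => (hv i).2.le) (j + 1) k
  rw [PlusMinusOneGame.deficit, sum_sub_distrib, Fintype.card_fin] at hbound
  change (#{i ∈ range (j + 1) | PlusMinusOneGame.greedyPicks v i = k} : ℝ) - _ ≥ _
  rw [natCast_card_filter]
  linarith
end

section
/- In the d-dimensional +1/−1-game, Player B can force some coordinate below −H(d−1): there is a sequence of stochastic vectors (depending on Player A's choices) such that for every sequence of positions n₀,…,n_{d−2} ∈ {1,…,d} chosen by Player A, there is some round j ≤ d−2 and coordinate k with |{i ≤ j : nᵢ = k}| − Σ_{i=0}^{j} (vᵢ)_k ≤ −H(d−1), where H(m) = Σ_{i=1}^{m} 1/i is the m-th harmonic number. Concretely: if in round r (0-indexed, r < d−1) Player B distributes weight 1/(d−r) uniformly over d−r positions that Player A has never played in rounds 0 through r, then after round d−2 the position never played by Player A has accumulated value −H(d−1). -/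
/-!
Player B always spreads her unit weight uniformly over the `d - 1 - r` greatest positions that
Player A has not played in rounds `0, …, r`. Let `k` be the greatest position A never plays in
rounds `0, …, d - 2`. Every position above `k` that is still unplayed after round `r` must be
played in one of the `d - 2 - r` later rounds, so `k` is among those `d - 1 - r` greatest and
receives `1 / (d - 1 - r)` in every round. Summing, its value is `-(1 / (d - 1) + ⋯ + 1 / 1)`.
-/

open Finset

section GreatestElems

variable {α : Type*} [LinearOrder α]

def upperRank (s : Finset α) (x : α) : ℕ := #(s.filter (x ≤ ·))

def greatestElems (s : Finset α) (m : ℕ) : Finset α := s.filter (upperRank s · ≤ m)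

lemma upperRank_strictAntiOn (s : Finset α) : StrictAntiOn (upperRank s) s := by
  intro x hx y hy hxy
  refine card_lt_card ⟨monotone_filter_right s fun _ _ => hxy.le.trans, fun hsub => ?_⟩
  exact (mem_filter.mp (hsub (mem_filter.mpr ⟨hx, le_rfl⟩))).2.not_gt hxy

lemma upperRank_mem_Icc {s : Finset α} {x : α} (hx : x ∈ s) : upperRank s x ∈ Icc 1 #s :=
  mem_Icc.mpr ⟨card_pos.mpr ⟨x, mem_filter.mpr ⟨hx, le_rfl⟩⟩, card_filter_le _ _⟩

lemma card_greatestElems {s : Finset α} {m : ℕ} (hm : m ≤ #s) : #(greatestElems s m) = m := by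
  have hinj := (upperRank_strictAntiOn s).injOn
  have hle : #(greatestElems s m) ≤ #(Icc 1 m) :=
    card_le_card_of_injOn _ (fun x hx => by
      obtain ⟨hxs, hxm⟩ := mem_filter.mp hx
      exact mem_Icc.mpr ⟨(mem_Icc.mp (upperRank_mem_Icc hxs)).1, hxm⟩)
      (hinj.mono (filter_subset _ _))
  have hge : #(s.filter (¬ upperRank s · ≤ m)) ≤ #(Icc (m + 1) #s) :=
    card_le_card_of_injOn _ (fun x hx => by
      obtain ⟨hxs, hxm⟩ := mem_filter.mp hx
      exact mem_Icc.mpr ⟨by omega, (mem_Icc.mp (upperRank_mem_Icc hxs)).2⟩)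
      (hinj.mono (filter_subset _ _))
  have hsplit := card_filter_add_card_filter_not (s := s) (upperRank s · ≤ m)
  simp only [Nat.card_Icc] at hle hge
  unfold greatestElems at hle ⊢
  omega

end GreatestElems

section UniformWeight

variable {α : Type*} [DecidableEq α]

noncomputable def uniformWeight (s : Finset α) (k : α) : ℝ := if k ∈ s then (#s : ℝ)⁻¹ else 0

lemma uniformWeight_nonneg (s : Finset α) (k : α) : 0 ≤ uniformWeight s k := by
  unfold uniformWeight; split_ifs <;> positivity

lemma sum_uniformWeight [Fintype α] {s : Finset α} (hs : s.Nonempty) :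
    ∑ k, uniformWeight s k = 1 := by
  simp only [uniformWeight, sum_ite_mem, univ_inter, sum_const, nsmul_eq_mul]
  exact mul_inv_cancel₀ (Nat.cast_ne_zero.mpr hs.card_pos.ne' : (#s : ℝ) ≠ 0)

end UniformWeight

section Unplayed

variable {ι α : Type*} [Fintype ι] [Fintype α] [DecidableEq α]

def unplayed (f : ι → α) : Finset α := (univ.image f)ᶜ

lemma mem_unplayed {f : ι → α} {k : α} : k ∈ unplayed f ↔ ∀ t, f t ≠ k := by
  simp [unplayed]

lemma card_sub_card_le_card_unplayed (f : ι → α) :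
    Fintype.card α - Fintype.card ι ≤ #(unplayed f) := by
  rw [unplayed, card_compl]
  exact Nat.sub_le_sub_left card_image_le _

end Unplayed

lemma mem_greatestElems_unplayed_of_isGreatest {α : Type*} [LinearOrder α] [Fintype α]
    {n : ℕ → α} {i j : ℕ} (hij : i ≤ j) {k : α}
    (hk : IsGreatest (unplayed fun t : Fin (j + 1) => n t : Set α) k) :
    k ∈ greatestElems (unplayed fun t : Fin (i + 1) => n t) (j - i + 1) := by
  have hk_mem : ∀ t ≤ j, n t ≠ k := fun t ht => mem_unplayed.mp hk.1 ⟨t, by omega⟩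
  refine mem_filter.mpr ⟨mem_unplayed.mpr fun t => hk_mem t (by omega), ?_⟩
  -- a position above `k` that is unplayed in rounds `0, …, i` is played in a round of `(i, j]`
  have hsub : (unplayed fun t : Fin (i + 1) => n t).filter (k ≤ ·) ⊆
      insert k ((Ico (i + 1) (j + 1)).image n) := by
    intro y hy
    obtain ⟨hy_unpl, hky⟩ := mem_filter.mp hy
    rcases hky.eq_or_lt with rfl | hlt
    · exact mem_insert_self _ _
    obtain ⟨t, hty⟩ : ∃ t : Fin (j + 1), n t = y := by
      by_contra! h
      exact hlt.not_ge (hk.2 (mem_unplayed.mpr h))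
    have hit : i < t := by
      by_contra! h
      exact mem_unplayed.mp hy_unpl ⟨t, by omega⟩ hty
    exact mem_insert_of_mem (mem_image.mpr ⟨t, mem_Ico.mpr ⟨hit, t.isLt⟩, hty⟩)
  calc upperRank _ k ≤ #(insert k ((Ico (i + 1) (j + 1)).image n)) := card_le_card hsub
    _ ≤ #(Ico (i + 1) (j + 1)) + 1 := (card_insert_le _ _).trans (by grw [card_image_le])
    _ = j - i + 1 := by rw [Nat.card_Ico]; omega

/-- The weight of round `r ≥ d - 1` never enters the bound; `univ` only keeps it stochastic. -/
def harmonicSupport (d r : ℕ) (f : Fin (r + 1) → Fin d) : Finset (Fin d) :=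
  if r + 1 < d then greatestElems (unplayed f) (d - 1 - r) else univ

noncomputable def harmonicStrategy (d r : ℕ) (f : Fin (r + 1) → Fin d) : Fin d → ℝ :=
  uniformWeight (harmonicSupport d r f)

lemma harmonicSupport_nonempty {d : ℕ} (hd : 1 ≤ d) (r : ℕ) (f : Fin (r + 1) → Fin d) :
    (harmonicSupport d r f).Nonempty := by
  unfold harmonicSupport
  split_ifs with hr
  · have := card_sub_card_le_card_unplayed f
    simp only [Fintype.card_fin] at this
    rw [← card_pos, card_greatestElems (by omega)]
    omega
  · exact univ_nonempty_iff.mpr ⟨⟨0, hd⟩⟩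

lemma harmonicStrategy_of_isGreatest {d : ℕ} {n : ℕ → Fin d} {k : Fin d}
    (hk : IsGreatest (unplayed fun t : Fin (d - 2 + 1) => n t : Set (Fin d)) k)
    {i : ℕ} (hi : i < d - 1) :
    harmonicStrategy d i (fun t : Fin (i + 1) => n t) k = ((d - 1 - i : ℕ) : ℝ)⁻¹ := by
  have hmem := mem_greatestElems_unplayed_of_isGreatest (show i ≤ d - 2 by omega) hk
  rw [show d - 2 - i + 1 = d - 1 - i by omega] at hmem
  have hcard := card_sub_card_le_card_unplayed fun t : Fin (i + 1) => n t
  simp only [Fintype.card_fin] at hcard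
  rw [harmonicStrategy, harmonicSupport, if_pos (by omega), uniformWeight, if_pos hmem,
    card_greatestElems (by omega)]

lemma sum_range_inv_sub (m : ℕ) :
    ∑ i ∈ range m, ((m - i : ℕ) : ℝ)⁻¹ = ∑ i ∈ range m, (1 : ℝ) / (i + 1) := by
  rw [← sum_range_reflect]
  refine sum_congr rfl fun i hi => ?_
  rw [mem_range] at hi
  rw [one_div, show m - (m - 1 - i) = i + 1 by omega]
  push_cast
  rfl

theorem playerB_forces_harmonic_threshold (d : ℕ) (hd : 1 ≤ d) :
    ∃ τ : (∀ r : ℕ, (Fin (r + 1) → Fin d) → (Fin d → ℝ)),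
      (∀ r f, (∀ k, 0 ≤ τ r f k) ∧ ∑ k, τ r f k = 1) ∧
      ∀ n : ℕ → Fin d, ∃ j ≤ d - 2, ∃ k : Fin d,
        (((Finset.range (j + 1)).filter (fun i => n i = k)).card : ℝ) -
            ∑ i ∈ Finset.range (j + 1), τ i (fun t : Fin (i + 1) => n t) k ≤
          -(∑ i ∈ Finset.range (d - 1), (1 : ℝ) / (i + 1)) := by
  refine ⟨harmonicStrategy d, fun r f => ⟨uniformWeight_nonneg _,
    sum_uniformWeight (harmonicSupport_nonempty hd r f)⟩, fun n => ?_⟩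
  obtain rfl | hd2 := hd.eq_or_lt
  · refine ⟨0, le_rfl, 0, ?_⟩
    simp [harmonicStrategy, harmonicSupport, uniformWeight, Subsingleton.elim _ (0 : Fin 1)]
  have hU := card_sub_card_le_card_unplayed fun t : Fin (d - 2 + 1) => n t
  simp only [Fintype.card_fin] at hU
  have hU_ne : (unplayed fun t : Fin (d - 2 + 1) => n t).Nonempty := card_pos.mp (by omega)
  have hk := isGreatest_max' _ hU_ne
  set k := (unplayed fun t : Fin (d - 2 + 1) => n t).max' hU_ne
  refine ⟨d - 2, le_rfl, k, ?_⟩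
  have hcount : (range (d - 2 + 1)).filter (fun i => n i = k) = ∅ :=
    filter_eq_empty_iff.mpr fun i hi =>
      mem_unplayed.mp hk.1 ⟨i, mem_range.mp hi⟩
  rw [hcount, show d - 2 + 1 = d - 1 by omega, sum_congr rfl fun i hi =>
    harmonicStrategy_of_isGreatest hk (mem_range.mp hi)]
  simp only [card_empty, Nat.cast_zero, zero_sub, sum_range_inv_sub, le_refl]
end
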